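/- arXiv:2503.12654 — 4 statements merged into one kernel-verified Lean document; each statement's English description precedes it below -/
import Mathlib

section
/- Let ω₋, ω₊ be real numbers with 0 < ω₋ < ω₊ and ω₊ ≠ 3ω₋. Then γ := min{ω₋, ω₊ − ω₋, |3ω₋ − ω₊|} > 0, and for every pair of multi-indices α = (α₁,α₂), β = (β₁,β₂) ∈ ℕ² with α₁+α₂+β₁+β₂ = 4 and α ≠ β, one has |ω₋(α₁−β₁) + ω₊(α₂−β₂)| ≥ γ. -/
set_option maxHeartbeats 2000000


/-- Nonresonant small-divisor bound (Proposition 4.1, first part):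
if `0 < ω₋ < ω₊` and `ω₊ ≠ 3ω₋`, then `γ := min {ω₋, ω₊ - ω₋, |3ω₋ - ω₊|} > 0`
and `|ω·(α-β)| ≥ γ` for all multi-indices `α ≠ β` with `|α+β| = 4`. -/
theorem small_divisors_nonresonant (ωm ωp : ℝ) (h0 : 0 < ωm) (h1 : ωm < ωp)
    (hres : ωp ≠ 3 * ωm) :
    0 < min (min ωm (ωp - ωm)) |3 * ωm - ωp| ∧
    ∀ α β : ℕ × ℕ, α.1 + α.2 + β.1 + β.2 = 4 → α ≠ β →
      min (min ωm (ωp - ωm)) |3 * ωm - ωp| ≤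
        |ωm * ((α.1 : ℝ) - (β.1 : ℝ)) + ωp * ((α.2 : ℝ) - (β.2 : ℝ))| := by
  have habs : 0 < |3 * ωm - ωp| := by
    rw [abs_pos]
    intro h
    exact hres (by linarith)
  constructor
  · exact lt_min (lt_min h0 (by linarith)) habs
  · intro α β hsum hne
    obtain ⟨a1, a2⟩ := α
    obtain ⟨b1, b2⟩ := β
    have hg1 : min (min ωm (ωp - ωm)) |3 * ωm - ωp| ≤ ωm :=
      le_trans (min_le_left _ _) (min_le_left _ _)
    have hg2 : min (min ωm (ωp - ωm)) |3 * ωm - ωp| ≤ ωp - ωm :=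
      le_trans (min_le_left _ _) (min_le_right _ _)
    have hg3 : min (min ωm (ωp - ωm)) |3 * ωm - ωp| ≤ |3 * ωm - ωp| :=
      min_le_right _ _
    rcases le_or_gt ωp (3 * ωm) with hc | hc
    · have hg3' : min (min ωm (ωp - ωm)) |3 * ωm - ωp| ≤ 3 * ωm - ωp :=
        hg3.trans_eq (abs_of_nonneg (by linarith))
      have ha1 : a1 ≤ 4 := by omega
      have ha2 : a2 ≤ 4 := by omega
      have hb1 : b1 ≤ 4 := by omega
      have hb2 : b2 ≤ 4 := by omega
      interval_cases a1 <;> interval_cases a2 <;> interval_cases b1 <;>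
        interval_cases b2 <;>
        first
          | exact absurd rfl hne
          | (rw [le_abs]
             first
               | (left; push_cast; linarith)
               | (right; push_cast; linarith))
    · have hg3' : min (min ωm (ωp - ωm)) |3 * ωm - ωp| ≤ ωp - 3 * ωm :=
        hg3.trans_eq ((abs_of_neg (by linarith)).trans (by ring))
      have ha1 : a1 ≤ 4 := by omega
      have ha2 : a2 ≤ 4 := by omega
      have hb1 : b1 ≤ 4 := by omega
      have hb2 : b2 ≤ 4 := by omega
      interval_cases a1 <;> interval_cases a2 <;> interval_cases b1 <;>
        interval_cases b2 <;>
        first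
          | exact absurd rfl hne
          | (rw [le_abs]
             first
               | (left; push_cast; linarith)
               | (right; push_cast; linarith))
end

section
/- Let ω₋, ω₊ be real numbers with 0 < ω₋ < ω₊ and ω₊ = 3ω₋. Then γ_res := min{ω₋, ω₊ − ω₋} > 0, and for every pair of multi-indices α = (α₁,α₂), β = (β₁,β₂) ∈ ℕ² with α₁+α₂+β₁+β₂ = 4, α ≠ β, and (α,β) ∉ {((3,0),(0,1)), ((0,1),(3,0))}, one has |ω₋(α₁−β₁) + ω₊(α₂−β₂)| ≥ γ_res. -/
/-- Resonant small-divisor bound (Proposition 4.1, second part):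
if `0 < ω₋ < ω₊` and `ω₊ = 3ω₋`, then `γ_res := min {ω₋, ω₊ - ω₋} > 0` and
`|ω·(α-β)| ≥ γ_res` for all multi-indices `α ≠ β` with `|α+β| = 4`, apart from
the two resonant pairs `((3,0),(0,1))` and `((0,1),(3,0))`. -/
theorem small_divisors_resonant (ωm ωp : ℝ) (h0 : 0 < ωm) (h1 : ωm < ωp)
    (hres : ωp = 3 * ωm) :
    0 < min ωm (ωp - ωm) ∧
    ∀ α β : ℕ × ℕ, α.1 + α.2 + β.1 + β.2 = 4 → α ≠ β →
      (α, β) ≠ (((3, 0) : ℕ × ℕ), ((0, 1) : ℕ × ℕ)) →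
      (α, β) ≠ (((0, 1) : ℕ × ℕ), ((3, 0) : ℕ × ℕ)) →
      min ωm (ωp - ωm) ≤
        |ωm * ((α.1 : ℝ) - (β.1 : ℝ)) + ωp * ((α.2 : ℝ) - (β.2 : ℝ))| := by
  constructor
  · exact lt_min h0 (by linarith)
  · rintro ⟨a1, a2⟩ ⟨b1, b2⟩ hsum hne hr1 hr2
    simp only [Prod.mk.injEq, not_and, Ne] at hne hr1 hr2
    set k : ℤ := ((a1 : ℤ) - b1) + 3 * ((a2 : ℤ) - b2) with hk
    have hk0 : k ≠ 0 := by omega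
    have hk1 : (1 : ℝ) ≤ |(k : ℝ)| := by
      rw [← Int.cast_abs]
      exact_mod_cast Int.one_le_abs (by omega)
    have heq : ωm * ((a1 : ℝ) - b1) + ωp * ((a2 : ℝ) - b2) = ωm * (k : ℝ) := by
      push_cast [hk, hres]
      ring
    rw [heq, abs_mul, abs_of_pos h0]
    have : min ωm (ωp - ωm) ≤ ωm := min_le_left _ _
    nlinarith [abs_nonneg ((k:ℝ))]
end

section
/- Work in ℂ[z₁,z₂,w₁,w₂] with Poisson bracket {F,G} := i·∑_{j=1,2}(∂_{z_j}F·∂_{w_j}G − ∂_{w_j}F·∂_{z_j}G), and let N := ω₁z₁w₁ + ω₂z₂w₂ with 0 < ω₁ and ω₂ = 3ω₁. Let G = ∑_{|α+β|=4} G_{α,β} z^α w^β be a homogeneous polynomial of degree 4. Define S := ∑ (i·G_{α,β}/(ω₁(α₁−β₁)+ω₂(α₂−β₂))) z^α w^β, where the sum runs over all (α,β) with |α+β| = 4, α ≠ β, and (α,β) ∉ {((3,0),(0,1)), ((0,1),(3,0))}. Then G + {S, N} = ∑_{|α|=2} G_{α,α} z^α w^α + G_{(0,1),(3,0)} z₂w₁³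 + G_{(3,0),(0,1)} z₁³w₂. -/
open MvPolynomial

/-- The Poisson bracket `{F,G} := i·∑_{j=1,2}(∂_{z_j}F ∂_{w_j}G − ∂_{w_j}F ∂_{z_j}G)`
on `ℂ[z₁,z₂,w₁,w₂]`, where the variables are indexed as `z₁ = X 0`, `z₂ = X 1`,
`w₁ = X 2`, `w₂ = X 3`. -/
noncomputable def poissonBracket (F G : MvPolynomial (Fin 4) ℂ) :
    MvPolynomial (Fin 4) ℂ :=
  C Complex.I *
    ((pderiv 0 F * pderiv 2 G - pderiv 2 F * pderiv 0 G) +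
     (pderiv 1 F * pderiv 3 G - pderiv 3 F * pderiv 1 G))

/-- The exponent vector of the resonant monomial `z₂w₁³`, i.e. `α = (0,1)`, `β = (3,0)`. -/
noncomputable def expResA : Fin 4 →₀ ℕ := Finsupp.equivFunOnFinite.symm ![0, 1, 3, 0]

/-- The exponent vector of the resonant monomial `z₁³w₂`, i.e. `α = (3,0)`, `β = (0,1)`. -/
noncomputable def expResB : Fin 4 →₀ ℕ := Finsupp.equivFunOnFinite.symm ![3, 0, 0, 1]

/-!
The bracket with `N = ω₁ z₁w₁ + ω₂ z₂w₂` is diagonal on monomials: by Euler's identity in each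
variable, `{z^α w^β, N} = i ω·(α - β) z^α w^β`. Hence every monomial of `S` brackets to minus the
corresponding monomial of `G`, as soon as its divisor `ω·(α - β)` is nonzero. For `ω₂ = 3ω₁` the
divisor vanishes iff `(α₁ - β₁) + 3(α₂ - β₂) = 0`, and together with `|α + β| = 4` this leaves,
besides `α = β`, only the exponents of `z₂w₁³` and `z₁³w₂`: exactly the terms of `G` that survive.
-/

open Finset

namespace MvPolynomial

variable {σ R : Type*} [CommSemiring R]

theorem IsHomogeneous.degree_eq_of_mem_support {p : MvPolynomial σ R} {n : ℕ}
    (hp : p.IsHomogeneous n) {d : σ →₀ ℕ} (hd : d ∈ p.support) : d.degree = n := by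
  rw [Finsupp.degree_eq_weight_one]
  exact hp (mem_support_iff.mp hd)

theorem pderiv_monomial_mul_X (i : σ) (d : σ →₀ ℕ) (c : R) :
    pderiv i (monomial d c) * X i = monomial d (c * d i) := by
  rw [mul_comm, X_mul_pderiv_monomial, smul_monomial, nsmul_eq_mul']

theorem sum_support_filter_eq_monomial [DecidableEq σ] (p : MvPolynomial σ R) (a : σ →₀ ℕ) :
    ∑ d ∈ p.support.filter (· = a), monomial d (p.coeff d) = monomial a (p.coeff a) := by
  rw [filter_eq', apply_ite (∑ d ∈ ·, monomial d (p.coeff d)), sum_singleton, sum_empty,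
    ite_eq_left_iff]
  intro ha
  rw [notMem_support_iff.mp ha, monomial_zero]

theorem sum_support_filter_or_eq_add [DecidableEq σ] (p : MvPolynomial σ R)
    (Q : (σ →₀ ℕ) → Prop) [DecidablePred Q] {a b : σ →₀ ℕ} (ha : ¬Q a) (hb : ¬Q b) (hab : a ≠ b) :
    ∑ d ∈ p.support.filter (fun d => Q d ∨ d = a ∨ d = b), monomial d (p.coeff d) =
      ∑ d ∈ p.support.filter Q, monomial d (p.coeff d) + monomial a (p.coeff a) +
        monomial b (p.coeff b) := by
  have hab' : Disjoint (p.support.filter (· = a)) (p.support.filter (· = b)) :=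
    disjoint_filter.2 fun d _ hda hdb => hab (hda.symm.trans hdb)
  have hQ : Disjoint (p.support.filter Q) (p.support.filter (fun d => d = a ∨ d = b)) :=
    disjoint_filter.2 fun d _ hd hd' => by
      rcases hd' with rfl | rfl
      exacts [ha hd, hb hd]
  rw [filter_or, sum_union hQ, filter_or, sum_union hab', sum_support_filter_eq_monomial,
    sum_support_filter_eq_monomial, add_assoc]

end MvPolynomial

theorem poissonBracket_sum_left {ι : Type*} (s : Finset ι) (F : ι → MvPolynomial (Fin 4) ℂ)
    (N : MvPolynomial (Fin 4) ℂ) :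
    poissonBracket (∑ i ∈ s, F i) N = ∑ i ∈ s, poissonBracket (F i) N := by
  simp only [poissonBracket, map_sum, sum_mul, ← sum_sub_distrib, ← sum_add_distrib, mul_sum]

theorem poissonBracket_monomial_oscillator (a b : ℂ) (d : Fin 4 →₀ ℕ) (c : ℂ) :
    poissonBracket (monomial d c) (C a * X 0 * X 2 + C b * X 1 * X 3) =
      monomial d (Complex.I * c * (a * ((d 0 : ℂ) - d 2) + b * ((d 1 : ℂ) - d 3))) := by
  have hexpand : monomial d (Complex.I * c * (a * ((d 0 : ℂ) - d 2) + b * ((d 1 : ℂ) - d 3))) =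
      C (Complex.I * a) * (monomial d (c * d 0) - monomial d (c * d 2)) +
        C (Complex.I * b) * (monomial d (c * d 1) - monomial d (c * d 3)) := by
    simp only [C_mul_monomial, ← map_sub, ← map_add]
    ring_nf
  simp only [poissonBracket, map_add, Derivation.leibniz, pderiv_C, pderiv_X, Pi.single_apply,
    smul_eq_mul, Fin.reduceEq, if_true, if_false, hexpand, ← pderiv_monomial_mul_X, map_mul]
  ring

theorem eq_expResA_iff (d : Fin 4 →₀ ℕ) :
    d = expResA ↔ d 0 = 0 ∧ d 1 = 1 ∧ d 2 = 3 ∧ d 3 = 0 := by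
  refine ⟨by rintro rfl; exact ⟨rfl, rfl, rfl, rfl⟩, fun ⟨h0, h1, h2, h3⟩ => ?_⟩
  ext k
  fin_cases k <;> simp [expResA, h0, h1, h2, h3]

theorem eq_expResB_iff (d : Fin 4 →₀ ℕ) :
    d = expResB ↔ d 0 = 3 ∧ d 1 = 0 ∧ d 2 = 0 ∧ d 3 = 1 := by
  refine ⟨by rintro rfl; exact ⟨rfl, rfl, rfl, rfl⟩, fun ⟨h0, h1, h2, h3⟩ => ?_⟩
  ext k
  fin_cases k <;> simp [expResB, h0, h1, h2, h3]

theorem eq_expResA_or_eq_expResB_of_resonant {d : Fin 4 →₀ ℕ} (hdeg : d.degree = 4)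
    (hres : ((d 0 : ℤ) - d 2) + 3 * ((d 1 : ℤ) - d 3) = 0) (hdiag : ¬(d 0 = d 2 ∧ d 1 = d 3)) :
    d = expResA ∨ d = expResB := by
  rw [Finsupp.degree_eq_sum, Fin.sum_univ_four] at hdeg
  rw [eq_expResA_iff, eq_expResB_iff]
  omega

theorem divisor_ne_zero_of_nonresonant {ω₁ : ℝ} (hω₁ : ω₁ ≠ 0) {d : Fin 4 →₀ ℕ}
    (hdeg : d.degree = 4) (hdiag : ¬(d 0 = d 2 ∧ d 1 = d 3)) (hA : d ≠ expResA)
    (hB : d ≠ expResB) : ω₁ * ((d 0 : ℝ) - d 2) + 3 * ω₁ * ((d 1 : ℝ) - d 3) ≠ 0 := by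
  intro h
  have hres : ((d 0 : ℤ) - d 2) + 3 * ((d 1 : ℤ) - d 3) = 0 := by
    have : ω₁ * (((d 0 : ℝ) - d 2) + 3 * ((d 1 : ℝ) - d 3)) = 0 := by linear_combination h
    exact_mod_cast (mul_eq_zero.1 this).resolve_left hω₁
  rcases eq_expResA_or_eq_expResB_of_resonant hdeg hres hdiag with rfl | rfl
  exacts [hA rfl, hB rfl]

theorem poissonBracket_monomial_div_divisor (ω₁ ω₂ : ℝ) (d : Fin 4 →₀ ℕ) (g : ℂ)
    (h : ω₁ * ((d 0 : ℝ) - d 2) + ω₂ * ((d 1 : ℝ) - d 3) ≠ 0) :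
    poissonBracket
        (monomial d (Complex.I * g / ((ω₁ * ((d 0 : ℝ) - d 2) + ω₂ * ((d 1 : ℝ) - d 3) : ℝ) : ℂ)))
        (C (ω₁ : ℂ) * X 0 * X 2 + C (ω₂ : ℂ) * X 1 * X 3) =
      -monomial d g := by
  have hC : ((ω₁ * ((d 0 : ℝ) - d 2) + ω₂ * ((d 1 : ℝ) - d 3) : ℝ) : ℂ) ≠ 0 := by
    exact_mod_cast h
  rw [poissonBracket_monomial_oscillator, ← map_neg]
  congr 1
  push_cast at hC ⊢
  field_simp
  rw [Complex.I_sq]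
  ring

/-- Solution of the resonant homological equation at the 3:1 resonance `ω₂ = 3ω₁`:
removing the two resonant monomials from the generating function `S`, one gets
`G + {S,N} = ∑_{|α|=2} G_{α,α} z^α w^α + G_{(0,1),(3,0)} z₂w₁³ + G_{(3,0),(0,1)} z₁³w₂`. -/
theorem homological_equation_resonant (ω₁ ω₂ : ℝ) (hω₁ : 0 < ω₁) (hres : ω₂ = 3 * ω₁)
    (N : MvPolynomial (Fin 4) ℂ)
    (hN : N = C (ω₁ : ℂ) * X 0 * X 2 + C (ω₂ : ℂ) * X 1 * X 3)
    (G : MvPolynomial (Fin 4) ℂ) (hG : G.IsHomogeneous 4)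
    (S : MvPolynomial (Fin 4) ℂ)
    (hS : S = ∑ d ∈ G.support.filter
        (fun d => ¬(d 0 = d 2 ∧ d 1 = d 3) ∧ d ≠ expResA ∧ d ≠ expResB),
      monomial d
        (Complex.I * G.coeff d /
          ((ω₁ * ((d 0 : ℝ) - (d 2 : ℝ)) + ω₂ * ((d 1 : ℝ) - (d 3 : ℝ)) : ℝ) : ℂ))) :
    G + poissonBracket S N =
      (∑ d ∈ G.support.filter (fun d => d 0 = d 2 ∧ d 1 = d 3),
        monomial d (G.coeff d))
      + monomial expResA (G.coeff expResA)
      + monomial expResB (G.coeff expResB) := by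
  set P : (Fin 4 →₀ ℕ) → Prop := fun d => ¬(d 0 = d 2 ∧ d 1 = d 3) ∧ d ≠ expResA ∧ d ≠ expResB
  have hbracket : poissonBracket S N = -∑ d ∈ G.support.filter P, monomial d (G.coeff d) := by
    rw [hS, hN, poissonBracket_sum_left, ← sum_neg_distrib]
    refine sum_congr rfl fun d hd => ?_
    obtain ⟨hd, hdiag, hA, hB⟩ := mem_filter.1 hd
    refine poissonBracket_monomial_div_divisor _ _ d _ ?_
    rw [hres]
    exact divisor_ne_zero_of_nonresonant hω₁.ne' (hG.degree_eq_of_mem_support hd) hdiag hA hB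
  have hkept : G.support.filter (fun d => ¬P d) = G.support.filter
      (fun d => (d 0 = d 2 ∧ d 1 = d 3) ∨ d = expResA ∨ d = expResB) :=
    filter_congr fun d _ => by tauto
  have hAcoords := (eq_expResA_iff expResA).1 rfl
  have hBcoords := (eq_expResB_iff expResB).1 rfl
  have hsplit := sum_filter_add_sum_filter_not G.support P (fun d => monomial d (G.coeff d))
  rw [support_sum_monomial_coeff] at hsplit
  have hAB : expResA ≠ expResB := fun h => by rw [h] at hAcoords; omega
  rw [← sum_support_filter_or_eq_add G _ (by omega) (by omega) hAB, ← hkept, hbracket]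
  linear_combination -hsplit
end

section
/- Let ω₋, ω₊ > 0, N₃ ≠ 0, and φ₂⁻, φ₂⁺ be nonzero real numbers. The Jacobian matrix of the action-to-frequency map (I₁,I₂) ↦ (ω₋ + N₃(3(φ₂⁻)⁴/(4ω₋²)·I₁ + 3(φ₂⁻)²(φ₂⁺)²/(2ω₋ω₊)·I₂), ω₊ + N₃(3(φ₂⁺)⁴/(4ω₊²)·I₂ + 3(φ₂⁻)²(φ₂⁺)²/(2ω₋ω₊)·I₁)), namely the 2×2 matrix with rows (3N₃(φ₂⁻)⁴/(4ω₋²), 3N₃(φ₂⁻)²(φ₂⁺)²/(2ω₋ω₊)) and (3N₃(φ₂⁻)²(φ₂⁺)²/(2ω₋ω₊), 3N₃(φ₂⁺)⁴/(4ω₊²)), has determinant equal to −(27/16)·N₃²·(φ₂⁻)⁴(φ₂⁺)⁴/(ω₋²ω₊²), which is strictly negative; in particular the action-to-frequency map is an invertible affine map. -/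
open Matrix

/-- The Jacobian of the action-to-frequency map of the truncated Birkhoff normal
form (case `M₃ = 0`) has determinant `−(27/16)N₃²(φ₂⁻)⁴(φ₂⁺)⁴/(ω₋²ω₊²) < 0`;
in particular the (affine) action-to-frequency map is invertible. -/
theorem action_to_frequency_nondegenerate
    (ωm ωp N₃ φ₂m φ₂p : ℝ) (hωm : 0 < ωm) (hωp : 0 < ωp)
    (hN₃ : N₃ ≠ 0) (hφ₂m : φ₂m ≠ 0) (hφ₂p : φ₂p ≠ 0) :
    (!![3 * N₃ * φ₂m ^ 4 / (4 * ωm ^ 2), 3 * N₃ * φ₂m ^ 2 * φ₂p ^ 2 / (2 * ωm * ωp);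
        3 * N₃ * φ₂m ^ 2 * φ₂p ^ 2 / (2 * ωm * ωp), 3 * N₃ * φ₂p ^ 4 / (4 * ωp ^ 2)]).det
      = -(27 / 16) * N₃ ^ 2 * φ₂m ^ 4 * φ₂p ^ 4 / (ωm ^ 2 * ωp ^ 2) ∧
    (!![3 * N₃ * φ₂m ^ 4 / (4 * ωm ^ 2), 3 * N₃ * φ₂m ^ 2 * φ₂p ^ 2 / (2 * ωm * ωp);
        3 * N₃ * φ₂m ^ 2 * φ₂p ^ 2 / (2 * ωm * ωp), 3 * N₃ * φ₂p ^ 4 / (4 * ωp ^ 2)]).det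
      < 0 ∧
    Function.Bijective (fun I : ℝ × ℝ =>
      (ωm + N₃ * (3 * φ₂m ^ 4 / (4 * ωm ^ 2) * I.1 +
        3 * φ₂m ^ 2 * φ₂p ^ 2 / (2 * ωm * ωp) * I.2),
       ωp + N₃ * (3 * φ₂p ^ 4 / (4 * ωp ^ 2) * I.2 +
        3 * φ₂m ^ 2 * φ₂p ^ 2 / (2 * ωm * ωp) * I.1))) := by
  have hωm0 : ωm ≠ 0 := hωm.ne'
  have hωp0 : ωp ≠ 0 := hωp.ne'
  have hdet : (!![3 * N₃ * φ₂m ^ 4 / (4 * ωm ^ 2),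
        3 * N₃ * φ₂m ^ 2 * φ₂p ^ 2 / (2 * ωm * ωp);
        3 * N₃ * φ₂m ^ 2 * φ₂p ^ 2 / (2 * ωm * ωp),
        3 * N₃ * φ₂p ^ 4 / (4 * ωp ^ 2)]).det
      = -(27 / 16) * N₃ ^ 2 * φ₂m ^ 4 * φ₂p ^ 4 / (ωm ^ 2 * ωp ^ 2) := by
    rw [Matrix.det_fin_two_of]
    field_simp
    ring
  have hneg : -(27 / 16) * N₃ ^ 2 * φ₂m ^ 4 * φ₂p ^ 4 / (ωm ^ 2 * ωp ^ 2) < 0 := by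
    apply div_neg_of_neg_of_pos
    · have : 0 < (27 / 16) * N₃ ^ 2 * φ₂m ^ 4 * φ₂p ^ 4 := by positivity
      linarith
    · positivity
  refine ⟨hdet, hdet ▸ hneg, ?_⟩
  set a : ℝ := N₃ * (3 * φ₂m ^ 4 / (4 * ωm ^ 2)) with ha
  set b : ℝ := N₃ * (3 * φ₂m ^ 2 * φ₂p ^ 2 / (2 * ωm * ωp)) with hb
  set d : ℝ := N₃ * (3 * φ₂p ^ 4 / (4 * ωp ^ 2)) with hd
  have hD : a * d - b * b
      = -(27 / 16) * N₃ ^ 2 * φ₂m ^ 4 * φ₂p ^ 4 / (ωm ^ 2 * ωp ^ 2) := by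
    rw [ha, hb, hd]; field_simp; ring
  have hDne : a * d - b * b ≠ 0 := by rw [hD]; exact ne_of_lt hneg
  set D : ℝ := a * d - b * b with hDdef
  rw [Function.bijective_iff_has_inverse]
  refine ⟨fun p : ℝ × ℝ =>
    ((d * (p.1 - ωm) - b * (p.2 - ωp)) / D,
     (a * (p.2 - ωp) - b * (p.1 - ωm)) / D), ?_, ?_⟩
  · rintro ⟨x, y⟩
    have h1 : ωm + N₃ * (3 * φ₂m ^ 4 / (4 * ωm ^ 2) * x +
        3 * φ₂m ^ 2 * φ₂p ^ 2 / (2 * ωm * ωp) * y) = ωm + (a * x + b * y) := by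
      rw [ha, hb]; ring
    have h2 : ωp + N₃ * (3 * φ₂p ^ 4 / (4 * ωp ^ 2) * y +
        3 * φ₂m ^ 2 * φ₂p ^ 2 / (2 * ωm * ωp) * x) = ωp + (b * x + d * y) := by
      rw [hb, hd]; ring
    simp only [h1, h2, Prod.mk.injEq]
    constructor
    · field_simp
      ring
    · field_simp
      ring
  · rintro ⟨x, y⟩
    have h1 : ∀ u v : ℝ, ωm + N₃ * (3 * φ₂m ^ 4 / (4 * ωm ^ 2) * u +
        3 * φ₂m ^ 2 * φ₂p ^ 2 / (2 * ωm * ωp) * v) = ωm + (a * u + b * v) := by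
      intro u v; rw [ha, hb]; ring
    have h2 : ∀ u v : ℝ, ωp + N₃ * (3 * φ₂p ^ 4 / (4 * ωp ^ 2) * v +
        3 * φ₂m ^ 2 * φ₂p ^ 2 / (2 * ωm * ωp) * u) = ωp + (b * u + d * v) := by
      intro u v; rw [hb, hd]; ring
    simp only [h1, h2, Prod.mk.injEq]
    constructor
    · field_simp
      ring
    · field_simp
      ring
end
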